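/- For finite distributions: if p(x|a) is a kernel from a finite set 𝒜 to distributions on a finite set 𝒳, π is a distribution on 𝒜, and m(x) = ∑ₐ π(a)p(x|a), then the function K ↦ E[(1/K)∑ᵢ KL(p(·|A⁽ⁱ⁾) ‖ (1/K)∑ₖ p(·|A⁽ᵏ⁾))] with A⁽¹⁾,…,A⁽ᴷ⁾ i.i.d. ∼ π is bounded above by I(X;A) = ∑ₐ π(a) KL(p(·|a) ‖ m) for every K ≥ 1. -/

import Mathlib

/-!
For a fixed sample `A⁽¹⁾, …, A⁽ᴷ⁾`, the empirical mixture `q = (1/K) ∑ₖ p(·|A⁽ᵏ⁾)` minimises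
`r ↦ (1/K) ∑ᵢ KL(p(·|A⁽ⁱ⁾) ‖ r)` over probability vectors `r`, because the excess over the
minimum is `KL(q ‖ r) ≥ 0`. Taking `r = m` bounds the estimator by `(1/K) ∑ᵢ KL(p(·|A⁽ⁱ⁾) ‖ m)`,
and since each `A⁽ⁱ⁾ ∼ π` the expectation of every term is `I(X;A)`.
-/

open Finset

theorem mixture_pos {ι X : Type*} [Fintype ι] {w : ι → ℝ} {P : ι → X → ℝ}
    (hw : ∀ i, 0 ≤ w i) (hw1 : ∑ i, w i = 1) (hP : ∀ i x, 0 < P i x) (x : X) :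
    0 < ∑ i, w i * P i x := by
  obtain ⟨i, -, hi⟩ := exists_lt_of_sum_lt (s := univ) (f := 0) (g := w) (by simp [hw1])
  exact sum_pos' (fun j _ => mul_nonneg (hw j) (hP j x).le) ⟨i, mem_univ i, mul_pos hi (hP i x)⟩

theorem sum_mixture_eq_one {ι X : Type*} [Fintype ι] [Fintype X] {w : ι → ℝ}
    {P : ι → X → ℝ} (hw : ∑ i, w i = 1) (hP : ∀ i, ∑ x, P i x = 1) :
    ∑ x, ∑ i, w i * P i x = 1 := by
  rw [sum_comm]
  simp only [← mul_sum, hP, mul_one, hw]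

theorem sum_prod_mul_apply {ι A R : Type*} [Fintype ι] [DecidableEq ι] [Fintype A]
    [CommSemiring R] {w : A → R} (hw : ∑ a, w a = 1) (g : A → R) (i : ι) :
    ∑ f : ι → A, (∏ j, w (f j)) * g (f i) = ∑ a, w a * g a := by
  let u : ι → A → R := Function.update (fun _ => w) i (fun a => w a * g a)
  have hu : ∀ f : ι → A, (∏ j, w (f j)) * g (f i) = ∏ j, u j (f j) := by
    intro f
    simp only [u, Function.apply_update (fun j (v : A → R) => v (f j)),
      prod_update_of_mem (mem_univ i), sdiff_singleton_eq_erase,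
      ← mul_prod_erase univ (fun j => w (f j)) (mem_univ i)]
    ring
  simp only [hu, ← Fintype.prod_sum, u, Function.apply_update (fun _ (v : A → R) => ∑ a, v a),
    prod_update_of_mem (mem_univ i), hw, prod_const_one, mul_one]

theorem sum_prod_mul_average {ι A R : Type*} [Fintype ι] [DecidableEq ι] [Nonempty ι]
    [Fintype A] [Field R] [CharZero R] {w : A → R} (hw : ∑ a, w a = 1) (g : A → R) :
    ∑ f : ι → A, (∏ j, w (f j)) * ((1 / (Fintype.card ι : R)) * ∑ i, g (f i))
      = ∑ a, w a * g a := by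
  calc ∑ f : ι → A, (∏ j, w (f j)) * ((1 / (Fintype.card ι : R)) * ∑ i, g (f i))
      = (1 / (Fintype.card ι : R)) * ∑ i, ∑ f : ι → A, (∏ j, w (f j)) * g (f i) := by
        rw [sum_comm, mul_sum]
        simp only [mul_sum, mul_left_comm]
    _ = ∑ a, w a * g a := by
        simp only [sum_prod_mul_apply hw, sum_const, card_univ, nsmul_eq_mul, ← mul_assoc]
        field_simp

section RelEntropy

open Real

variable {X : Type*} [Fintype X]

noncomputable def relEntropy (P Q : X → ℝ) : ℝ := ∑ x, P x * log (P x / Q x)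

theorem sub_le_mul_log_div {q r : ℝ} (hq : 0 ≤ q) (hr : 0 < r) : q - r ≤ q * log (q / r) := by
  rcases hq.eq_or_lt with rfl | hq
  · simpa using hr.le
  have h := one_sub_inv_le_log_of_pos (div_pos hq hr)
  rw [inv_div] at h
  calc q - r = q * (1 - r / q) := by field_simp
    _ ≤ q * log (q / r) := mul_le_mul_of_nonneg_left h hq.le

theorem sum_sub_sum_le_relEntropy {q r : X → ℝ} (hq : ∀ x, 0 ≤ q x) (hr : ∀ x, 0 < r x) :
    ∑ x, q x - ∑ x, r x ≤ relEntropy q r := by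
  rw [← sum_sub_distrib]
  exact sum_le_sum fun x _ => sub_le_mul_log_div (hq x) (hr x)

theorem mul_log_div_sub_log_div {P q r : ℝ} (hP : 0 ≤ P) (hq : 0 < q) (hr : 0 < r) :
    P * (log (P / r) - log (P / q)) = P * log (q / r) := by
  rcases hP.eq_or_lt with rfl | hP
  · simp
  rw [log_div hP.ne' hr.ne', log_div hP.ne' hq.ne', log_div hq.ne' hr.ne']
  ring

variable {ι : Type*} [Fintype ι]

theorem sum_mul_relEntropy_mixture_le {w : ι → ℝ} {P : ι → X → ℝ} {r : X → ℝ}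
    (hP : ∀ i x, 0 ≤ P i x) (hq : ∀ x, 0 < ∑ i, w i * P i x) (hr : ∀ x, 0 < r x)
    (hmass : ∑ x, r x ≤ ∑ x, ∑ i, w i * P i x) :
    ∑ i, w i * relEntropy (P i) (fun x => ∑ j, w j * P j x)
      ≤ ∑ i, w i * relEntropy (P i) r := by
  set q : X → ℝ := fun x => ∑ j, w j * P j x
  have hgap : ∑ i, w i * relEntropy (P i) r - ∑ i, w i * relEntropy (P i) q
      = relEntropy q r := by
    have hlog : ∀ i x, P i x * (log (P i x / r x) - log (P i x / q x))
        = P i x * log (q x / r x) :=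
      fun i x => mul_log_div_sub_log_div (hP i x) (hq x) (hr x)
    simp only [relEntropy, ← sum_sub_distrib, ← mul_sub, hlog, mul_sum]
    rw [sum_comm]
    simp only [q, sum_mul, mul_assoc]
  have := sum_sub_sum_le_relEntropy (fun x => (hq x).le) hr
  linarith

theorem average_relEntropy_uniformMixture_le [Nonempty ι] {P : ι → X → ℝ} {r : X → ℝ}
    (hP : ∀ i x, 0 < P i x) (hP1 : ∀ i, ∑ x, P i x = 1) (hr : ∀ x, 0 < r x)
    (hr1 : ∑ x, r x ≤ 1) :
    (1 / (Fintype.card ι : ℝ)) *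
        ∑ i, relEntropy (P i) (fun x => (1 / (Fintype.card ι : ℝ)) * ∑ k, P k x)
      ≤ (1 / (Fintype.card ι : ℝ)) * ∑ i, relEntropy (P i) r := by
  set w : ι → ℝ := fun _ => 1 / (Fintype.card ι : ℝ)
  have hw1 : ∑ i, w i = 1 := by simp [w]
  have h := sum_mul_relEntropy_mixture_le (w := w) (fun i x => (hP i x).le)
    (mixture_pos (fun _ => by positivity) hw1 hP) hr (by rwa [sum_mixture_eq_one hw1 hP1])
  simpa only [w, ← mul_sum] using h

end RelEntropy
/-- The finite-`K` estimator of the mutual information, in expectation over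
`K` i.i.d. actions, is a lower bound on `I(X;A)`. -/
theorem stmt5 {A X : Type*} [Fintype A] [Fintype X]
    (p : A → X → ℝ) (π : A → ℝ)
    (hp0 : ∀ a x, 0 < p a x) (hp1 : ∀ a, ∑ x, p a x = 1)
    (hπ0 : ∀ a, 0 ≤ π a) (hπ1 : ∑ a, π a = 1)
    (K : ℕ) (hK : 1 ≤ K) :
    ∑ f : Fin K → A, (∏ i, π (f i)) *
        ((1 / (K : ℝ)) * ∑ i, ∑ x, p (f i) x *
          Real.log (p (f i) x / ((1 / (K : ℝ)) * ∑ k, p (f k) x)))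
      ≤ ∑ a, π a * ∑ x, p a x *
          Real.log (p a x / (∑ a', π a' * p a' x)) := by
  have : Nonempty (Fin K) := ⟨⟨0, hK⟩⟩
  set m : X → ℝ := fun x => ∑ a', π a' * p a' x
  have hm : ∀ x, 0 < m x := mixture_pos hπ0 hπ1 hp0
  have hm1 : ∑ x, m x = 1 := sum_mixture_eq_one hπ1 hp1
  calc _ ≤ ∑ f : Fin K → A, (∏ i, π (f i)) * ((1 / (K : ℝ)) * ∑ i, relEntropy (p (f i)) m) := by
        refine sum_le_sum fun f _ => mul_le_mul_of_nonneg_left ?_ (prod_nonneg fun i _ => hπ0 _)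
        have h := average_relEntropy_uniformMixture_le (P := fun i => p (f i)) (fun i => hp0 _)
          (fun i => hp1 _) hm hm1.le
        rwa [Fintype.card_fin] at h
    _ = ∑ a, π a * relEntropy (p a) m := by
        simpa only [Fintype.card_fin] using
          sum_prod_mul_average (ι := Fin K) hπ1 (fun a => relEntropy (p a) m)
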